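/- The map (i,j,k) ↦ ((j, w(k)), i) is a bijection from the set of 132-patterns of w onto the set of pairs ((a,b), ℓ) where (a,b) ∈ D(w) and ℓ ∈ {k : k ≤ a and w(k) ≤ b}. -/

import Mathlib

open Finset

/-- The Rothe diagram of a permutation (0-based coordinates). -/
def Rothe {n : ℕ} (w : Equiv.Perm (Fin n)) : Finset (Fin n × Fin n) :=
  Finset.univ.filter (fun p => p.2 < w p.1 ∧ p.1 < w⁻¹ p.2)

/-- The rank function r_w(i,j) = #{k : k ≤ i and w(k) ≤ j}. -/
def rk {n : ℕ} (w : Equiv.Perm (Fin n)) (i j : Fin n) : ℕ :=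
  (Finset.univ.filter (fun k => k ≤ i ∧ w k ≤ j)).card

/-- m_i(w) = #{j : j > i and w(j) < w(i)}. -/
def mrow {n : ℕ} (w : Equiv.Perm (Fin n)) (i : Fin n) : ℕ :=
  (Finset.univ.filter (fun j => i < j ∧ w j < w i)).card

/-- The set of 132-patterns of w. -/
def P132 {n : ℕ} (w : Equiv.Perm (Fin n)) : Finset (Fin n × Fin n × Fin n) :=
  Finset.univ.filter
    (fun t => t.1 < t.2.1 ∧ t.2.1 < t.2.2 ∧ w t.1 < w t.2.2 ∧ w t.2.2 < w t.2.1)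

/-!
The inverse map is `((a, b), ℓ) ↦ (ℓ, a, w⁻¹ b)`. The only point is that the weak
inequalities `ℓ ≤ a` and `w ℓ ≤ b` are automatically strict: equality `ℓ = a` would give
`w a ≤ b < w a`, and `ℓ = w⁻¹ b` would give `w⁻¹ b ≤ a < w⁻¹ b`.
-/

section

variable {n : ℕ} (w : Equiv.Perm (Fin n))

@[simp]
lemma mem_P132 {i j k : Fin n} :
    (i, j, k) ∈ P132 w ↔ i < j ∧ j < k ∧ w i < w k ∧ w k < w j := by
  simp [P132]

@[simp]
lemma mem_Rothe {a b : Fin n} : (a, b) ∈ Rothe w ↔ b < w a ∧ a < w⁻¹ b := by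
  simp [Rothe]

def rothePairs : Set ((Fin n × Fin n) × Fin n) :=
  {x | x.1 ∈ Rothe w ∧ x.2 ≤ x.1.1 ∧ w x.2 ≤ x.1.2}

lemma mapsTo_P132_rothePairs :
    Set.MapsTo (fun t : Fin n × Fin n × Fin n => ((t.2.1, w t.2.2), t.1))
      (P132 w) (rothePairs w) := by
  rintro ⟨i, j, k⟩ ht
  obtain ⟨hij, hjk, hik, hkj⟩ := (mem_P132 w).1 ht
  exact ⟨(mem_Rothe w).2 ⟨hkj, by simpa using hjk⟩, hij.le, hik.le⟩

lemma mapsTo_rothePairs_P132 :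
    Set.MapsTo (fun x : (Fin n × Fin n) × Fin n => (x.2, x.1.1, w⁻¹ x.1.2))
      (rothePairs w) (P132 w) := by
  rintro ⟨⟨a, b⟩, ℓ⟩ ⟨hab, hℓa, hwℓ⟩
  dsimp only at hℓa hwℓ
  obtain ⟨hba, haw⟩ := (mem_Rothe w).1 hab
  have hℓa' : ℓ < a := hℓa.lt_of_ne (by rintro rfl; exact (hwℓ.trans_lt hba).false)
  have hwℓ' : w ℓ < b := hwℓ.lt_of_ne fun h => by
    rw [← Equiv.Perm.eq_inv_iff_eq.2 h] at haw
    exact (hℓa.trans_lt haw).false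
  exact (mem_P132 w).2 ⟨hℓa', haw, by simpa using hwℓ', by simpa using hba⟩

end

/-- The map (i,j,k) ↦ ((j, w(k)), i) is a bijection from the set of
132-patterns of w onto the pairs ((a,b), ℓ) with (a,b) ∈ D(w), ℓ ≤ a and w(ℓ) ≤ b. -/
theorem stmt17 {n : ℕ} (w : Equiv.Perm (Fin n)) :
    Set.BijOn (fun t : Fin n × Fin n × Fin n => ((t.2.1, w t.2.2), t.1))
      (↑(P132 w))
      {x : (Fin n × Fin n) × Fin n |
        x.1 ∈ Rothe w ∧ x.2 ≤ x.1.1 ∧ w x.2 ≤ x.1.2} := by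
  refine Set.InvOn.bijOn (f' := fun x => (x.2, x.1.1, w⁻¹ x.1.2)) ⟨?_, ?_⟩
    (mapsTo_P132_rothePairs w) (mapsTo_rothePairs_P132 w)
  · rintro ⟨i, j, k⟩ -
    simp
  · rintro ⟨⟨a, b⟩, ℓ⟩ -
    simp
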